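/- Let R be a commutative ring and A an associative unital R-algebra. The two-sided ideal generated by L_k(A) equals A·L_k(A), i.e., M_k(A) = A·L_k(A) = span of elements a·l with a ∈ A, l ∈ L_k(A). -/
import Mathlib


/-- The lower central series of an associative unital `R`-algebra `A`,
as `R`-submodules; `lcs R A k` corresponds to `L_k(A)` for `k ≥ 1`. -/
def lcs (R A : Type*) [CommRing R] [Ring A] [Algebra R A] : ℕ → Submodule R A
  | 0 => ⊤
  | 1 => ⊤
  | (k + 2) =>
      Submodule.span R {x | ∃ a l, l ∈ lcs R A (k + 1) ∧ x = a * l - l * a}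

/-- `Mideal R A k` is the two-sided ideal of `A` generated by `L_k(A)`. -/
def Mideal (R A : Type*) [CommRing R] [Ring A] [Algebra R A] (k : ℕ) :
    Submodule R A :=
  Submodule.span R {x | ∃ a l b, l ∈ lcs R A k ∧ x = a * l * b}

lemma lcs_succ_le (R A : Type*) [CommRing R] [Ring A] [Algebra R A] :
    ∀ k : ℕ, lcs R A (k + 1) ≤ lcs R A k
  | 0 => le_top
  | 1 => le_top
  | (k + 2) => by
      show lcs R A (k + 3) ≤ lcs R A (k + 2)
      have ih := lcs_succ_le R A (k + 1)
      show Submodule.span R _ ≤ Submodule.span R _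
      apply Submodule.span_mono
      rintro x ⟨a, l, hl, rfl⟩
      exact ⟨a, l, ih hl, rfl⟩

lemma comm_mem_lcs (R A : Type*) [CommRing R] [Ring A] [Algebra R A] (k : ℕ)
    (hk : 1 ≤ k) {l : A} (hl : l ∈ lcs R A k) (b : A) :
    b * l - l * b ∈ lcs R A k := by
  obtain ⟨j, rfl⟩ := Nat.exists_eq_add_of_le hk
  apply lcs_succ_le R A (1 + j)
  have : 1 + j + 1 = j + 2 := by omega
  rw [this]
  exact Submodule.subset_span ⟨b, l, by rwa [show j + 1 = 1 + j by ring], rfl⟩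

/-- The two-sided ideal generated by `L_k(A)` equals the left ideal
`A · L_k(A)`. -/
theorem stmt_17 (R A : Type*) [CommRing R] [Ring A] [Algebra R A] (k : ℕ)
    (hk : 1 ≤ k) :
    Mideal R A k =
      Submodule.span R {x | ∃ a l, l ∈ lcs R A k ∧ x = a * l} := by
  set T := Submodule.span R {x | ∃ a l, l ∈ lcs R A k ∧ x = a * l} with hT
  have hmul : ∀ x ∈ T, ∀ b : A, x * b ∈ T := by
    intro x hx b
    induction hx using Submodule.span_induction with
    | mem x hx =>
        obtain ⟨a, l, hl, rfl⟩ := hx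
        have key : a * l * b = (a * b) * l - a * (b * l - l * b) := by noncomm_ring
        rw [key]
        exact sub_mem (Submodule.subset_span ⟨a * b, l, hl, rfl⟩)
          (Submodule.subset_span ⟨a, b * l - l * b, comm_mem_lcs R A k hk hl b, rfl⟩)
    | zero => simp
    | add x y _ _ hx hy => rw [add_mul]; exact add_mem hx hy
    | smul r x _ hx => rw [smul_mul_assoc]; exact Submodule.smul_mem T r hx
  apply le_antisymm
  · rw [Mideal]
    apply Submodule.span_le.mpr
    rintro x ⟨a, l, b, hl, rfl⟩
    exact hmul (a * l) (Submodule.subset_span ⟨a, l, hl, rfl⟩) b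
  · apply Submodule.span_le.mpr
    rintro x ⟨a, l, hl, rfl⟩
    exact Submodule.subset_span ⟨a, l, 1, hl, by rw [mul_one]⟩
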